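/- arXiv:1806.00598 — 7 statements merged into one kernel-verified Lean document; each statement's English description precedes it below -/
import Mathlib

section
/- Let K be a field of characteristic different from 2 and let a, b be nonzero elements of K. Then the quaternion algebra ℍ[K,a,b] is isomorphic as a K-algebra to the algebra of 2×2 matrices over K if and only if the quadratic form x² − a·y² − b·z² in three variables has a nontrivial zero over K (i.e., there exist x, y, z ∈ K, not all zero, with x² − a·y² − b·z² = 0). -/
/-!
A nonzero matrix `N` with `N² = 0` pulls back to a quaternion `p ≠ 0` with `p² = 0`. Comparing
components forces `p` to be pure with `a p₁² + b p₂² - ab p₃² = 0`; multiplied by `ab` this says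
that `(ab p₃, b p₂, a p₁)` is a zero of `x² - a y² - b z²`.

Conversely, a nontrivial zero of the form writes `a = u² - b v²` (when `y = 0`, `b` is a square
and `u² - b v²` is a hyperbolic plane, which represents everything). Then
`i = [[u, v], [-bv, -u]]` and `j = [[0, 1], [b, 0]]` satisfy the quaternion relations in
`M₂(K)`, and the entries of the image of `q` determine the coordinates of `q`, so the induced
algebra map is injective, hence bijective by dimension count.
-/

open Quaternion

section

variable {K : Type*} [Field K] {a b : K}

theorem Matrix.exists_ne_zero_mul_self_eq_zero_fin_two {R : Type*} [Semiring R] [Nontrivial R] :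
    ∃ N : Matrix (Fin 2) (Fin 2) R, N ≠ 0 ∧ N * N = 0 :=
  ⟨!![0, 1; 0, 0], fun h => by simpa using congrFun (congrFun h 0) 1, by
    ext i j; fin_cases i <;> fin_cases j <;> simp⟩

theorem QuaternionAlgebra.exists_isotropic_of_mul_self_eq_zero (h2 : (2 : K) ≠ 0) (ha : a ≠ 0)
    (hb : b ≠ 0) {p : ℍ[K,a,b]} (hp : p ≠ 0) (hpp : p * p = 0) :
    ∃ x y z : K, ¬ (x = 0 ∧ y = 0 ∧ z = 0) ∧ x ^ 2 - a * y ^ 2 - b * z ^ 2 = 0 := by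
  have hR := congrArg re hpp
  have hI := congrArg imI hpp
  have hJ := congrArg imJ hpp
  have hK := congrArg imK hpp
  simp only [QuaternionAlgebra.re_mul, QuaternionAlgebra.imI_mul, QuaternionAlgebra.imJ_mul,
    QuaternionAlgebra.imK_mul, QuaternionAlgebra.re_zero, QuaternionAlgebra.imI_zero,
    QuaternionAlgebra.imJ_zero, QuaternionAlgebra.imK_zero] at hR hI hJ hK
  have hre : p.re = 0 := by
    by_contra hre
    have cancel (c : K) (hc : 2 * p.re * c = 0) : c = 0 :=
      eq_zero_of_ne_zero_of_mul_left_eq_zero (mul_ne_zero h2 hre) hc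
    have hI0 := cancel p.imI (by linear_combination hI)
    have hJ0 := cancel p.imJ (by linear_combination hJ)
    have hK0 := cancel p.imK (by linear_combination hK)
    exact hre (pow_eq_zero_iff two_ne_zero |>.mp (by
      linear_combination hR - a * p.imI * hI0 - b * p.imJ * hJ0 + a * b * p.imK * hK0))
  refine ⟨a * b * p.imK, b * p.imJ, a * p.imI, ?_, ?_⟩
  · rintro ⟨hx, hy, hz⟩
    refine hp (QuaternionAlgebra.ext hre ?_ ?_ ?_) <;> simp_all
  · linear_combination (-(a * b)) * hR + a * b * p.re * hre

theorem exists_isotropic_of_algEquiv_matrix (h2 : (2 : K) ≠ 0) (ha : a ≠ 0) (hb : b ≠ 0)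
    (e : ℍ[K,a,b] ≃ₐ[K] Matrix (Fin 2) (Fin 2) K) :
    ∃ x y z : K, ¬ (x = 0 ∧ y = 0 ∧ z = 0) ∧ x ^ 2 - a * y ^ 2 - b * z ^ 2 = 0 := by
  obtain ⟨N, hN, hNN⟩ := Matrix.exists_ne_zero_mul_self_eq_zero_fin_two (R := K)
  refine QuaternionAlgebra.exists_isotropic_of_mul_self_eq_zero h2 ha hb (p := e.symm N)
    (by simpa using hN) ?_
  rw [← map_mul, hNN, map_zero]

-- `u² - t² v² = (u - t v) (u + t v)`: take `u - t v = 1` and `u + t v = c`.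
theorem exists_sq_sub_sq_mul_sq_eq (h2 : (2 : K) ≠ 0) {t : K} (ht : t ≠ 0) (c : K) :
    ∃ u v : K, u ^ 2 - t ^ 2 * v ^ 2 = c :=
  ⟨(c + 1) / 2, (c - 1) / (2 * t), by field_simp; ring⟩

theorem exists_sq_sub_mul_sq_eq_of_isotropic (h2 : (2 : K) ≠ 0) (hb : b ≠ 0) {x y z : K}
    (hxyz : ¬ (x = 0 ∧ y = 0 ∧ z = 0)) (h : x ^ 2 - a * y ^ 2 - b * z ^ 2 = 0) :
    ∃ u v : K, u ^ 2 - b * v ^ 2 = a := by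
  by_cases hy : y = 0
  · subst hy
    have hz : z ≠ 0 := by
      rintro rfl
      exact hxyz ⟨pow_eq_zero_iff two_ne_zero |>.mp (by linear_combination h), rfl, rfl⟩
    have hb_sq : b = (x / z) ^ 2 := by field_simp; linear_combination -h
    have hxz : x / z ≠ 0 := fun h0 => hb (by rw [hb_sq, h0, zero_pow two_ne_zero])
    rw [hb_sq]
    exact exists_sq_sub_sq_mul_sq_eq h2 hxz a
  · exact ⟨x / y, z / y, by field_simp; linear_combination h⟩

namespace Matrix

-- `i` has trace `0` and determinant `-a`, so `i² = a` by Cayley–Hamilton.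
def quaternionBasis {u v : K} (huv : u ^ 2 - b * v ^ 2 = a) :
    QuaternionAlgebra.Basis (Matrix (Fin 2) (Fin 2) K) a 0 b where
  i := !![u, v; -(b * v), -u]
  j := !![0, 1; b, 0]
  k := !![b * v, u; -(b * u), -(b * v)]
  i_mul_i := by
    rw [mul_fin_two, one_fin_two, ← huv]
    ext i j; fin_cases i <;> fin_cases j <;> simp <;> ring
  j_mul_j := by
    rw [mul_fin_two, one_fin_two]
    ext i j; fin_cases i <;> fin_cases j <;> simp
  i_mul_j := by
    rw [mul_fin_two]
    ext i j; fin_cases i <;> fin_cases j <;> simp <;> ring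
  j_mul_i := by
    rw [mul_fin_two]
    ext i j; fin_cases i <;> fin_cases j <;> simp

theorem quaternionBasis_liftHom_apply {u v : K} (huv : u ^ 2 - b * v ^ 2 = a) (q : ℍ[K,a,b]) :
    (quaternionBasis huv).liftHom q =
      !![q.re + u * q.imI + b * v * q.imK, v * q.imI + q.imJ + u * q.imK;
        -(b * v * q.imI) + b * q.imJ - b * u * q.imK, q.re - u * q.imI - b * v * q.imK] := by
  ext i j
  fin_cases i <;> fin_cases j <;>
    simp [quaternionBasis, QuaternionAlgebra.Basis.lift, algebraMap_matrix_apply] <;> ring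

theorem quaternionBasis_liftHom_injective (h2 : (2 : K) ≠ 0) (ha : a ≠ 0) (hb : b ≠ 0)
    {u v : K} (huv : u ^ 2 - b * v ^ 2 = a) :
    Function.Injective (quaternionBasis huv).liftHom := by
  rw [injective_iff_map_eq_zero]
  intro q hq
  rw [quaternionBasis_liftHom_apply, ← ext_iff] at hq
  have e00 := hq 0 0
  have e01 := hq 0 1
  have e10 := hq 1 0
  have e11 := hq 1 1
  simp only [of_apply, cons_val', cons_val_zero, cons_val_one, cons_val_fin_one, zero_apply]
    at e00 e01 e10 e11
  have hre : q.re = 0 :=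
    eq_zero_of_ne_zero_of_mul_left_eq_zero h2 (by linear_combination e00 + e11)
  have hJ : q.imJ = 0 :=
    eq_zero_of_ne_zero_of_mul_left_eq_zero (mul_ne_zero h2 hb) (by linear_combination b * e01 + e10)
  have hI : q.imI = 0 := eq_zero_of_ne_zero_of_mul_left_eq_zero ha (by
    linear_combination u * e00 - b * v * e01 - u * hre + b * v * hJ - q.imI * huv)
  have hK : q.imK = 0 := eq_zero_of_ne_zero_of_mul_left_eq_zero ha (by
    linear_combination u * e01 - v * e00 + v * hre - u * hJ - q.imK * huv)
  exact QuaternionAlgebra.ext hre hI hJ hK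

noncomputable def quaternionAlgEquiv (h2 : (2 : K) ≠ 0) (ha : a ≠ 0) (hb : b ≠ 0) {u v : K}
    (huv : u ^ 2 - b * v ^ 2 = a) : ℍ[K,a,b] ≃ₐ[K] Matrix (Fin 2) (Fin 2) K :=
  have hinj := quaternionBasis_liftHom_injective h2 ha hb huv
  have hrank : Module.finrank K ℍ[K,a,b] = Module.finrank K (Matrix (Fin 2) (Fin 2) K) := by
    simp [QuaternionAlgebra.finrank_eq_four, Module.finrank_matrix]
  AlgEquiv.ofBijective _
    ⟨hinj, (LinearMap.injective_iff_surjective_of_finrank_eq_finrank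
      (f := (quaternionBasis huv).liftHom.toLinearMap) hrank).mp hinj⟩

end Matrix

end

/-- For a field `K` of characteristic ≠ 2 and nonzero `a b : K`, the quaternion
algebra `ℍ[K,a,b]` is isomorphic to the 2×2 matrix algebra over `K` iff the quadratic form
`x² − a y² − b z²` has a nontrivial zero over `K`. -/
theorem quaternionAlgebra_iso_matrix_iff_ternary_form_has_nontrivial_zero
    (K : Type*) [Field K] (hchar : ringChar K ≠ 2) (a b : K) (ha : a ≠ 0) (hb : b ≠ 0) :
    Nonempty (ℍ[K, a, b] ≃ₐ[K] Matrix (Fin 2) (Fin 2) K) ↔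
      ∃ x y z : K, ¬ (x = 0 ∧ y = 0 ∧ z = 0) ∧ x ^ 2 - a * y ^ 2 - b * z ^ 2 = 0 := by
  have h2 : (2 : K) ≠ 0 := Ring.two_ne_zero hchar
  constructor
  · rintro ⟨e⟩
    exact exists_isotropic_of_algEquiv_matrix h2 ha hb e
  · rintro ⟨x, y, z, hxyz, h⟩
    obtain ⟨u, v, huv⟩ := exists_sq_sub_mul_sq_eq_of_isotropic h2 hb hxyz h
    exact ⟨Matrix.quaternionAlgEquiv h2 ha hb huv⟩
end

section
/- Let K be a field of characteristic different from 2 and let a, b be nonzero elements of K. Then either the quaternion algebra ℍ[K,a,b] is a division ring, or it is isomorphic as a K-algebra to the algebra of 2×2 matrices over K. -/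
/-!
Write `N(x) = re² - a·imI² - b·imJ² + ab·imK²` for the norm form, so that `x * star x = N(x)`;
every `x` with `N(x) ≠ 0` is invertible. If `N` has a nontrivial zero, then `b` is a norm
`p² - a q²` from `K(√a)` (when `a` is a square every element is such a norm). In that case
`i ↦ [[0, a], [1, 0]]`, `j ↦ [[p, -aq], [q, -p]]` is a quaternionic basis of the 2×2 matrices,
and the induced algebra map is injective, hence bijective by counting dimensions.
-/

open Quaternion

section Field

variable {K : Type*} [Field K]

theorem exists_sq_sub_mul_sq_eq_of_isSquare (h2 : (2 : K) ≠ 0) {a : K} (ha : a ≠ 0)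
    (hsq : IsSquare a) (b : K) : ∃ p q : K, p ^ 2 - a * q ^ 2 = b := by
  obtain ⟨α, rfl⟩ := hsq
  have hα : α ≠ 0 := by rintro rfl; exact ha (mul_zero 0)
  refine ⟨(b + 1) / 2, (b - 1) / (2 * α), ?_⟩
  field_simp
  ring

theorem eq_zero_and_eq_zero_of_sq_sub_mul_sq_eq_zero {a x y : K} (ha : ¬IsSquare a)
    (h : x ^ 2 - a * y ^ 2 = 0) : x = 0 ∧ y = 0 := by
  have hy : y = 0 := by
    by_contra hy
    exact ha ⟨x / y, by field_simp; linear_combination -h⟩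
  subst hy
  exact ⟨pow_eq_zero_iff two_ne_zero |>.1 (by simpa using h), rfl⟩

end Field

namespace QuaternionAlgebra

section CommRing

variable {R : Type*} [CommRing R]

theorem re_self_mul_star {c₁ c₃ : R} (x : ℍ[R, c₁, 0, c₃]) :
    (x * star x).re = x.re ^ 2 - c₁ * x.imI ^ 2 - c₃ * x.imJ ^ 2 + c₁ * c₃ * x.imK ^ 2 := by
  simp only [re_mul, re_star, imI_star, imJ_star, imK_star]
  ring

theorem isUnit_of_isUnit_re_self_mul_star {c₁ c₂ c₃ : R} {x : ℍ[R, c₁, c₂, c₃]}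
    (h : IsUnit (x * star x).re) : IsUnit x := by
  have hx : IsUnit (x * star x) := by
    rw [mul_star_eq_coe]
    exact h.map (algebraMap R _)
  exact ((Commute.isUnit_mul_iff (star_comm_self' x).symm).1 hx).1

def matrixBasis (a p q : R) : Basis (Matrix (Fin 2) (Fin 2) R) a 0 (p ^ 2 - a * q ^ 2) where
  i := !![0, a; 1, 0]
  j := !![p, -(a * q); q, -p]
  k := !![a * q, -(a * p); p, -(a * q)]
  i_mul_i := by ext i j; fin_cases i <;> fin_cases j <;> simp
  j_mul_j := by ext i j; fin_cases i <;> fin_cases j <;> simp <;> ring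
  i_mul_j := by ext i j; fin_cases i <;> fin_cases j <;> simp
  j_mul_i := by ext i j; fin_cases i <;> fin_cases j <;> simp <;> ring

theorem matrixBasis_liftHom_apply (a p q : R) (x : ℍ[R, a, 0, p ^ 2 - a * q ^ 2]) :
    (matrixBasis a p q).liftHom x =
      !![x.re + p * x.imJ + a * q * x.imK, a * x.imI - a * q * x.imJ - a * p * x.imK;
        x.imI + q * x.imJ + p * x.imK, x.re - p * x.imJ - a * q * x.imK] := by
  ext i j
  fin_cases i <;> fin_cases j <;>
    simp [Basis.lift, matrixBasis, Matrix.algebraMap_eq_diagonal] <;> ring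

end CommRing

section Field

variable {K : Type*} [Field K]

theorem exists_sq_sub_mul_sq_eq_of_re_self_mul_star_eq_zero {a b : K} (ha : ¬IsSquare a)
    {x : ℍ[K, a, b]} (hx : x ≠ 0) (hn : (x * star x).re = 0) :
    ∃ p q : K, p ^ 2 - a * q ^ 2 = b := by
  rw [re_self_mul_star] at hn
  set d := x.imJ ^ 2 - a * x.imK ^ 2
  have hd : d ≠ 0 := by
    intro hd
    obtain ⟨hJ, hK⟩ := eq_zero_and_eq_zero_of_sq_sub_mul_sq_eq_zero ha hd
    obtain ⟨hr, hI⟩ := eq_zero_and_eq_zero_of_sq_sub_mul_sq_eq_zero (x := x.re) (y := x.imI) ha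
      (by rw [hJ, hK] at hn; linear_combination hn)
    exact hx (QuaternionAlgebra.ext hr hI hJ hK)
  -- the norm from `K(√a)` is multiplicative and `hn` says `re² - a imI² = b d`
  refine ⟨(x.re * x.imJ - a * x.imI * x.imK) / d, (x.imI * x.imJ - x.re * x.imK) / d, ?_⟩
  field_simp
  linear_combination d * hn

theorem matrixBasis_liftHom_injective (h2 : (2 : K) ≠ 0) {a p q : K} (ha : a ≠ 0)
    (hb : p ^ 2 - a * q ^ 2 ≠ 0) : Function.Injective (matrixBasis a p q).liftHom := by
  rw [injective_iff_map_eq_zero]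
  intro x hx
  rw [matrixBasis_liftHom_apply, ← Matrix.ext_iff] at hx
  have h00 := hx 0 0
  have h01 := hx 0 1
  have h10 := hx 1 0
  have h11 := hx 1 1
  simp only [Matrix.of_apply, Matrix.cons_val', Matrix.cons_val_zero, Matrix.cons_val_one,
    Matrix.empty_val', Matrix.cons_val_fin_one, Matrix.zero_apply] at h00 h01 h10 h11
  have cancel (t : K) (ht : 2 * a * (p ^ 2 - a * q ^ 2) * t = 0) : t = 0 :=
    (mul_eq_zero.1 ht).resolve_left (mul_ne_zero (mul_ne_zero h2 ha) hb)
  -- in the bases `1, i, j, k` and `E₀₀, E₀₁, E₁₀, E₁₁` this linear map has determinant `4ab`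
  exact QuaternionAlgebra.ext
    (cancel _ (by linear_combination a * (p ^ 2 - a * q ^ 2) * (h00 + h11)))
    (cancel _ (by linear_combination (p ^ 2 - a * q ^ 2) * (h01 + a * h10)))
    (cancel _ (by linear_combination a * p * (h00 - h11) - a * q * (a * h10 - h01)))
    (cancel _ (by linear_combination p * (a * h10 - h01) - a * q * (h00 - h11)))

theorem nonempty_algEquiv_matrix_of_sq_sub_mul_sq_eq (h2 : (2 : K) ≠ 0) {a b p q : K}
    (ha : a ≠ 0) (hb : b ≠ 0) (h : p ^ 2 - a * q ^ 2 = b) :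
    Nonempty (ℍ[K, a, b] ≃ₐ[K] Matrix (Fin 2) (Fin 2) K) := by
  subst h
  have hinj := matrixBasis_liftHom_injective h2 ha hb
  have hsurj : Function.Surjective (matrixBasis a p q).liftHom :=
    (LinearMap.injective_iff_surjective_of_finrank_eq_finrank
      (by simp [finrank_eq_four, Module.finrank_matrix])
      (f := (matrixBasis a p q).liftHom.toLinearMap)).1 hinj
  exact ⟨AlgEquiv.ofBijective _ ⟨hinj, hsurj⟩⟩

end Field

end QuaternionAlgebra

/-- For a field `K` of characteristic ≠ 2 and nonzero `a b : K`, the quaternion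
algebra `ℍ[K,a,b]` is either a division ring (every nonzero element is invertible) or
isomorphic as a `K`-algebra to the 2×2 matrix algebra over `K`. -/
theorem quaternionAlgebra_isDivisionRing_or_iso_matrix
    (K : Type*) [Field K] (hchar : ringChar K ≠ 2) (a b : K) (ha : a ≠ 0) (hb : b ≠ 0) :
    (∀ q : ℍ[K, a, b], q ≠ 0 → IsUnit q) ∨
      Nonempty (ℍ[K, a, b] ≃ₐ[K] Matrix (Fin 2) (Fin 2) K) := by
  have h2 : (2 : K) ≠ 0 := Ring.two_ne_zero hchar
  by_cases hnorm : ∃ p q : K, p ^ 2 - a * q ^ 2 = b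
  · obtain ⟨p, q, h⟩ := hnorm
    exact Or.inr (QuaternionAlgebra.nonempty_algEquiv_matrix_of_sq_sub_mul_sq_eq h2 ha hb h)
  · have hsq : ¬IsSquare a := fun hsq => hnorm (exists_sq_sub_mul_sq_eq_of_isSquare h2 ha hsq b)
    exact Or.inl fun x hx => QuaternionAlgebra.isUnit_of_isUnit_re_self_mul_star <| Ne.isUnit fun hN =>
      hnorm (QuaternionAlgebra.exists_sq_sub_mul_sq_eq_of_re_self_mul_star_eq_zero hsq hx hN)
end

section
/- Let K be a field of characteristic different from 2, let a, b, d, a′, b′, d′ be nonzero elements of K, and let c ∈ K be nonzero. If the diagonal quadratic form ⟨1, −a, −b, a·b·d⟩ (i.e., x² − a·y² − b·z² + a·b·d·w²) is equivalent (isometric) to the scaled diagonal quadratic form c·⟨1, −a′, −b′, a′·b′·d′⟩, then d and d′ differ by a square: there exists e ∈ K, e ≠ 0, with d′ = d·e². (In other words, the class of d in K*/K*², the discriminant of the quadric surface defined by the form, does not depend on the choice of the diagonal form defining the quadric.) -/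
/-!
The determinant of the Gram matrix of a quadratic form on `Kⁿ` changes by the square of a unit
under isometries and by `cⁿ` under scaling by `c`. For the diagonal forms at hand this reads
`a²b²d = u²c⁴a'²b'²d'`, so `d' = d · (ab / (u c² a' b'))²`.
-/

open QuadraticMap

namespace QuadraticForm

variable {R ι : Type*} [CommRing R] [Invertible (2 : R)] [Fintype ι]

theorem associated_weightedSumSquares_apply (w : ι → R) (x y : ι → R) :
    associated (weightedSumSquares R w) x y = ∑ i, w i * x i * y i := by
  rw [associated_apply, invOf_smul_eq_iff, two_smul]
  simp only [weightedSumSquares_apply, smul_eq_mul, Pi.add_apply, ← Finset.sum_sub_distrib,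
    ← Finset.sum_add_distrib]
  exact Finset.sum_congr rfl fun i _ => by ring

variable [DecidableEq ι]

theorem toMatrix'_weightedSumSquares (w : ι → R) :
    toMatrix' (weightedSumSquares R w) = Matrix.diagonal w := by
  ext i j
  rw [toMatrix', LinearMap.toMatrix₂'_apply, associated_weightedSumSquares_apply]
  rcases eq_or_ne i j with rfl | hij
  · simp [Pi.single_apply]
  · simp [Pi.single_apply, hij, hij.symm]

theorem discr'_weightedSumSquares (w : ι → R) :
    discr' (weightedSumSquares R w) = ∏ i, w i := by
  rw [discr', toMatrix'_weightedSumSquares, Matrix.det_diagonal]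

theorem _root_.QuadraticMap.Equivalent.exists_discr'_eq_unit_sq_mul
    {Q₁ Q₂ : QuadraticForm R (ι → R)} (h : Q₁.Equivalent Q₂) : ∃ u : Rˣ, Q₁.discr' = u ^ 2 * Q₂.discr' := by
  obtain ⟨f⟩ := h
  obtain ⟨u, hu⟩ := LinearEquiv.isUnit_det' f.toLinearEquiv
  refine ⟨u, ?_⟩
  have hcomp : Q₂.comp f.toLinearEquiv.toLinearMap = Q₁ := QuadraticMap.ext f.map_app
  rw [← hcomp, discr'_comp, LinearMap.det_toMatrix', hu, _root_.sq]

end QuadraticForm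

theorem exists_ne_zero_eq_mul_sq_of_sq_mul_eq {K : Type*} [Field K] {x y d d' : K}
    (hx : x ≠ 0) (hy : y ≠ 0) (h : x ^ 2 * d = y ^ 2 * d') : ∃ e : K, e ≠ 0 ∧ d' = d * e ^ 2 :=
  ⟨x / y, div_ne_zero hx hy, by field_simp; linear_combination -h⟩

theorem discriminant_well_defined_of_equivalent_diagonal_quadric_general
    (K : Type*) [Field K] (hchar : ringChar K ≠ 2) (a b d a' b' d' c : K)
    (ha : a ≠ 0) (hb : b ≠ 0) (ha' : a' ≠ 0) (hb' : b' ≠ 0)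
    (hc : c ≠ 0)
    (h : (weightedSumSquares K ![1, -a, -b, a * b * d]).Equivalent
      (c • weightedSumSquares K ![1, -a', -b', a' * b' * d'])) :
    ∃ e : K, e ≠ 0 ∧ d' = d * e ^ 2 := by
  have : Invertible (2 : K) := invertibleOfNonzero (Ring.two_ne_zero hchar)
  obtain ⟨u, hu⟩ := h.exists_discr'_eq_unit_sq_mul
  simp only [QuadraticForm.discr'_smul, QuadraticForm.discr'_weightedSumSquares,
    Fin.prod_univ_four, Fintype.card_fin, Matrix.cons_val] at hu
  refine exists_ne_zero_eq_mul_sq_of_sq_mul_eq (x := a * b) (y := u * c ^ 2 * a' * b')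
    (mul_ne_zero ha hb) (by simp [hc, ha', hb']) ?_
  linear_combination hu

/-- Over a field `K` of characteristic ≠ 2, if the diagonal quadratic form
`⟨1, −a, −b, a·b·d⟩` is equivalent to a scaling `c • ⟨1, −a′, −b′, a′·b′·d′⟩` (with all of
`a, b, d, a′, b′, d′, c` nonzero), then `d` and `d′` differ by a nonzero square, i.e. the
discriminant class of the quadric in `K*/K*²` is well defined. -/
theorem discriminant_well_defined_of_equivalent_diagonal_quadric
    (K : Type*) [Field K] (hchar : ringChar K ≠ 2) (a b d a' b' d' c : K)
    (ha : a ≠ 0) (hb : b ≠ 0) (hd : d ≠ 0) (ha' : a' ≠ 0) (hb' : b' ≠ 0) (hd' : d' ≠ 0)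
    (hc : c ≠ 0)
    (h : (weightedSumSquares K ![1, -a, -b, a * b * d]).Equivalent
      (c • weightedSumSquares K ![1, -a', -b', a' * b' * d'])) :
    ∃ e : K, e ≠ 0 ∧ d' = d * e ^ 2 :=
  discriminant_well_defined_of_equivalent_diagonal_quadric_general K hchar a b d a' b' d' c ha hb
    ha' hb' hc h
end

section
/- Let F be the field of fractions of the polynomial ring ℂ[x,y] in two variables over the complex numbers (the rational function field ℂ(x,y)). Then the element F(x,y,1) = x² + y² + 1 − 2·x·y − 2·y − 2·x of this field is not a square: there is no g ∈ ℂ(x,y) with g² = x² + y² + 1 − 2·x·y − 2·y − 2·x. -/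
/-- In the rational function field `ℂ(x,y)` (the fraction field of the polynomial
ring `ℂ[x,y]`), the element `x² + y² + 1 − 2xy − 2y − 2x` (the dehomogenization `F(x,y,1)` of
the HPT quadric discriminant `F(x,y,z) = x² + y² + z² − 2(xy+yz+zx)`) is not a square. -/
theorem hpt_discriminant_not_square
    (x y : FractionRing (MvPolynomial (Fin 2) ℂ))
    (hx : x = algebraMap (MvPolynomial (Fin 2) ℂ) _ (MvPolynomial.X 0))
    (hy : y = algebraMap (MvPolynomial (Fin 2) ℂ) _ (MvPolynomial.X 1)) :
    ¬ ∃ g : FractionRing (MvPolynomial (Fin 2) ℂ),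
        g ^ 2 = x ^ 2 + y ^ 2 + 1 - 2 * x * y - 2 * y - 2 * x := by
  rintro ⟨g, hg⟩
  -- the polynomial p ∈ ℂ[x,y]
  let p : MvPolynomial (Fin 2) ℂ :=
      MvPolynomial.X 0 ^ 2 + MvPolynomial.X 1 ^ 2 + 1
      - 2 * MvPolynomial.X 0 * MvPolynomial.X 1 - 2 * MvPolynomial.X 1
      - 2 * MvPolynomial.X 0
  have hgp : g ^ 2 =
      algebraMap (MvPolynomial (Fin 2) ℂ) (FractionRing (MvPolynomial (Fin 2) ℂ)) p := by
    rw [hg, hx, hy]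
    show _ = algebraMap (MvPolynomial (Fin 2) ℂ) (FractionRing (MvPolynomial (Fin 2) ℂ))
        (MvPolynomial.X 0 ^ 2 + MvPolynomial.X 1 ^ 2 + 1
          - 2 * MvPolynomial.X 0 * MvPolynomial.X 1 - 2 * MvPolynomial.X 1
          - 2 * MvPolynomial.X 0)
    push_cast [map_add, map_sub, map_mul, map_pow, map_one, map_ofNat]
    ring
  -- g is integral over ℂ[x,y], hence comes from ℂ[x,y]
  have hint : IsIntegral (MvPolynomial (Fin 2) ℂ) g := by
    refine ⟨Polynomial.X ^ 2 - Polynomial.C p, Polynomial.monic_X_pow_sub_C p two_ne_zero, ?_⟩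
    simp [hgp]
  obtain ⟨q, hq⟩ := IsIntegrallyClosed.isIntegral_iff.mp hint
  have hq2 : q ^ 2 = p := by
    apply IsFractionRing.injective (MvPolynomial (Fin 2) ℂ)
      (FractionRing (MvPolynomial (Fin 2) ℂ))
    rw [map_pow, hq, hgp]
  -- specialize y ↦ 1
  let φ : MvPolynomial (Fin 2) ℂ →+* Polynomial ℂ :=
    (MvPolynomial.eval₂Hom Polynomial.C (fun i => if i = 0 then Polynomial.X else 1))
  have hr2 : (φ q) ^ 2 = Polynomial.X ^ 2 - 4 * Polynomial.X := by
    rw [← map_pow, hq2]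
    show φ (MvPolynomial.X 0 ^ 2 + MvPolynomial.X 1 ^ 2 + 1
      - 2 * MvPolynomial.X 0 * MvPolynomial.X 1 - 2 * MvPolynomial.X 1
      - 2 * MvPolynomial.X 0) = _
    simp only [map_add, map_sub, map_mul, map_pow, map_one, map_ofNat,
      MvPolynomial.eval₂Hom_X', φ]
    norm_num
    ring
  -- (φ q)(0) = 0, so X ∣ φ q
  have h0 : (φ q).eval 0 = 0 := by
    have : ((φ q).eval 0) ^ 2 = 0 := by
      rw [← Polynomial.eval_pow, hr2]; simp
    exact pow_eq_zero_iff two_ne_zero |>.mp this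
  have hdvd : Polynomial.X ∣ φ q := by
    simpa using (Polynomial.dvd_iff_isRoot (p := φ q) (a := 0)).mpr h0
  obtain ⟨s, hs⟩ := hdvd
  have hXs : Polynomial.X * s ^ 2 = Polynomial.X - 4 := by
    have hX : (Polynomial.X : Polynomial ℂ) ≠ 0 := Polynomial.X_ne_zero
    apply mul_left_cancel₀ hX
    have h' : (Polynomial.X * s) ^ 2 = Polynomial.X ^ 2 - 4 * Polynomial.X := by
      rw [← hs, hr2]
    calc Polynomial.X * (Polynomial.X * s ^ 2)
        = (Polynomial.X * s) ^ 2 := by ring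
      _ = Polynomial.X ^ 2 - 4 * Polynomial.X := h'
      _ = Polynomial.X * (Polynomial.X - 4) := by ring
  have := congrArg (Polynomial.eval 0) hXs
  simp at this
end

section
/- Let F be the field of fractions of the polynomial ring ℂ[x,y] in two variables over the complex numbers (the rational function field ℂ(x,y)), and let x, y denote the images of the two variables in F. Then the quaternion algebra ℍ[F, x, y] is a division ring (every nonzero element is invertible). In particular its class in the Brauer group of ℂ(x,y) is nonzero. -/
/-!
The reduced norm `N = t² - x u² - y v² + x y w²` of `ℍ[ℂ(x,y), x, y]` has no nontrivial zero,
so a nonzero quaternion `q` is invertible with inverse `N(q)⁻¹ star q`. Clearing denominators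
reduces this to zeros over `ℂ[x,y] = ℂ[y][x]`. Setting `x = 0` in `N = 0` gives
`t(0)² = y v(0)²`, impossible in `ℂ[y]` unless `t(0) = v(0) = 0` (compare `y`-degrees); then
`x` divides `t, v`, and cancelling `x` once gives likewise `u(0) = w(0) = 0`. Dividing all four
coordinates by `x` yields a new zero, so by descent every coordinate is divisible by every
power of `x`, hence vanishes.
-/

open Quaternion

/-- The form is the reduced norm of `ℍ[R,a,b]`, see `QuaternionAlgebra.re_mul_star`. -/
def NormFormAnisotropic {R : Type*} [CommRing R] (a b : R) : Prop :=
  ∀ t u v w : R, t ^ 2 - a * u ^ 2 - b * v ^ 2 + a * b * w ^ 2 = 0 →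
    t = 0 ∧ u = 0 ∧ v = 0 ∧ w = 0

namespace QuaternionAlgebra

theorem re_mul_star {R : Type*} [CommRing R] {a b : R} (q : ℍ[R,a,b]) :
    (q * star q).re = q.re ^ 2 - a * q.imI ^ 2 - b * q.imJ ^ 2 + a * b * q.imK ^ 2 := by
  simp only [re_mul, re_star, imI_star, imJ_star, imK_star]
  ring

theorem isUnit_of_re_mul_star_ne_zero {K : Type*} [Field K] {c₁ c₂ c₃ : K}
    {q : ℍ[K,c₁,c₂,c₃]} (h : (q * star q).re ≠ 0) : IsUnit q := by
  set r := (q * star q).re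
  have hr : q * star q = r := mul_star_eq_coe q
  have hr' : star q * q = r := by rw [star_comm_self', hr]
  have hrr : ((r⁻¹ : K) : ℍ[K,c₁,c₂,c₃]) * r = 1 := by rw [← coe_mul, inv_mul_cancel₀ h, coe_one]
  refine isUnit_iff_exists.mpr ⟨(r⁻¹ : K) * star q, ?_, ?_⟩
  · rw [← mul_assoc, ← coe_commutes, mul_assoc, hr, hrr]
  · rw [mul_assoc, hr', hrr]

end QuaternionAlgebra

namespace NormFormAnisotropic

variable {R S : Type*} [CommRing R] [CommRing S]

theorem isUnit {K : Type*} [Field K] {a b : K} (h : NormFormAnisotropic a b) {q : ℍ[K,a,b]}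
    (hq : q ≠ 0) : IsUnit q := by
  refine QuaternionAlgebra.isUnit_of_re_mul_star_ne_zero fun h0 => hq ?_
  rw [QuaternionAlgebra.re_mul_star] at h0
  obtain ⟨hre, himI, himJ, himK⟩ := h _ _ _ _ h0
  exact QuaternionAlgebra.ext hre himI himJ himK

theorem of_injective {F : Type*} [FunLike F R S] [RingHomClass F R S] {f : F}
    (hf : Function.Injective f) {a b : R} (h : NormFormAnisotropic (f a) (f b)) :
    NormFormAnisotropic a b := by
  intro t u v w hzero
  have := h (f t) (f u) (f v) (f w) (by simpa using congrArg f hzero)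
  simpa only [map_eq_zero_iff f hf] using this

theorem algebraMap_of_isFractionRing (K : Type*) [IsDomain R] [Field K] [Algebra R K]
    [IsFractionRing R K] {a b : R} (h : NormFormAnisotropic a b) :
    NormFormAnisotropic (algebraMap R K a) (algebraMap R K b) := by
  intro t u v w hzero
  obtain ⟨d, hd⟩ :=
    IsLocalization.exist_integer_multiples_of_finite (nonZeroDivisors R) ![t, u, v, w]
  obtain ⟨t', ht⟩ := hd 0
  obtain ⟨u', hu⟩ := hd 1
  obtain ⟨v', hv⟩ := hd 2
  obtain ⟨w', hw⟩ := hd 3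
  simp only [Matrix.cons_val, Algebra.smul_def] at ht hu hv hw
  have hd0 : algebraMap R K d ≠ 0 := IsFractionRing.to_map_ne_zero_of_mem_nonZeroDivisors d.2
  have hzero' : t' ^ 2 - a * u' ^ 2 - b * v' ^ 2 + a * b * w' ^ 2 = 0 := by
    apply IsFractionRing.injective R K
    simp only [map_sub, map_add, map_mul, map_pow, map_zero, ht, hu, hv, hw]
    linear_combination algebraMap R K d ^ 2 * hzero
  obtain ⟨rfl, rfl, rfl, rfl⟩ := h t' u' v' w' hzero'
  simp only [map_zero, eq_comm (a := (0 : K)), mul_eq_zero, hd0, false_or] at ht hu hv hw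
  exact ⟨ht, hu, hv, hw⟩

end NormFormAnisotropic

namespace Polynomial

section CommRing

variable {R : Type*} [CommRing R]

theorem eq_zero_of_forall_X_pow_dvd {p : R[X]} (h : ∀ n, X ^ n ∣ p) : p = 0 := by
  ext d
  exact X_pow_dvd_iff.mp (h (d + 1)) d d.lt_succ_self

theorem X_dvd_of_sq_eval_zero_eq_mul_sq {t : R}
    (ht : ∀ p q : R, p ^ 2 = t * q ^ 2 → p = 0 ∧ q = 0)
    {P Q : R[X]} (h : P.eval 0 ^ 2 = t * Q.eval 0 ^ 2) : X ∣ P ∧ X ∣ Q := by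
  obtain ⟨hP, hQ⟩ := ht _ _ h
  exact ⟨X_dvd_iff.mpr (by rwa [coeff_zero_eq_eval_zero]),
    X_dvd_iff.mpr (by rwa [coeff_zero_eq_eval_zero])⟩

end CommRing

variable {A : Type*} [CommRing A] [IsDomain A]

theorem eq_zero_of_sq_eq_X_mul_sq {p q : A[X]} (h : p ^ 2 = X * q ^ 2) : p = 0 ∧ q = 0 := by
  obtain rfl | hq := eq_or_ne q 0
  · simpa using h
  have hp : p ≠ 0 := by
    rintro rfl
    simp [hq] at h
  have hdeg := congrArg natDegree h
  rw [natDegree_pow, natDegree_mul X_ne_zero (pow_ne_zero 2 hq), natDegree_X,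
    natDegree_pow] at hdeg
  omega

theorem normForm_X_C_descent {t : A} (ht : ∀ p q : A, p ^ 2 = t * q ^ 2 → p = 0 ∧ q = 0)
    {P Q R S : A[X]} (h : P ^ 2 - X * Q ^ 2 - C t * R ^ 2 + X * C t * S ^ 2 = 0) :
    ∃ P₁ Q₁ R₁ S₁ : A[X], P = X * P₁ ∧ Q = X * Q₁ ∧ R = X * R₁ ∧ S = X * S₁ ∧
      P₁ ^ 2 - X * Q₁ ^ 2 - C t * R₁ ^ 2 + X * C t * S₁ ^ 2 = 0 := by
  obtain ⟨⟨P₁, rfl⟩, ⟨R₁, rfl⟩⟩ := X_dvd_of_sq_eval_zero_eq_mul_sq ht (P := P) (Q := R) (by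
    simpa [sub_eq_zero] using congrArg (eval 0) h)
  have h' : Q ^ 2 - C t * S ^ 2 - X * P₁ ^ 2 + X * C t * R₁ ^ 2 = 0 := by
    refine mul_left_cancel₀ X_ne_zero ?_
    linear_combination -h
  obtain ⟨⟨Q₁, rfl⟩, ⟨S₁, rfl⟩⟩ := X_dvd_of_sq_eval_zero_eq_mul_sq ht (P := Q) (Q := S) (by
    simpa [sub_eq_zero] using congrArg (eval 0) h')
  refine ⟨P₁, Q₁, R₁, S₁, rfl, rfl, rfl, rfl, mul_left_cancel₀ (pow_ne_zero 2 X_ne_zero) ?_⟩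
  linear_combination h

theorem normFormAnisotropic_X_C {t : A} (ht : ∀ p q : A, p ^ 2 = t * q ^ 2 → p = 0 ∧ q = 0) :
    NormFormAnisotropic (X : A[X]) (C t) := by
  have hdvd : ∀ n, ∀ P Q R S : A[X], P ^ 2 - X * Q ^ 2 - C t * R ^ 2 + X * C t * S ^ 2 = 0 →
      X ^ n ∣ P ∧ X ^ n ∣ Q ∧ X ^ n ∣ R ∧ X ^ n ∣ S := by
    intro n
    induction n with
    | zero => simp
    | succ n ih =>
      intro P Q R S h
      obtain ⟨P₁, Q₁, R₁, S₁, rfl, rfl, rfl, rfl, h₁⟩ := normForm_X_C_descent ht h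
      obtain ⟨hP, hQ, hR, hS⟩ := ih P₁ Q₁ R₁ S₁ h₁
      simp only [pow_succ']
      exact ⟨mul_dvd_mul_left X hP, mul_dvd_mul_left X hQ, mul_dvd_mul_left X hR,
        mul_dvd_mul_left X hS⟩
  intro P Q R S h
  exact ⟨eq_zero_of_forall_X_pow_dvd fun n => (hdvd n _ _ _ _ h).1,
    eq_zero_of_forall_X_pow_dvd fun n => (hdvd n _ _ _ _ h).2.1,
    eq_zero_of_forall_X_pow_dvd fun n => (hdvd n _ _ _ _ h).2.2.1,
    eq_zero_of_forall_X_pow_dvd fun n => (hdvd n _ _ _ _ h).2.2.2⟩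

end Polynomial

namespace MvPolynomial

variable {k : Type*} [CommRing k] [IsDomain k]

theorem eq_zero_of_sq_eq_X_zero_mul_sq {p q : MvPolynomial (Fin 1) k}
    (h : p ^ 2 = X 0 * q ^ 2) : p = 0 ∧ q = 0 := by
  have h' := congrArg (finSuccEquiv k 0) h
  rw [map_pow, map_mul, map_pow, finSuccEquiv_X_zero] at h'
  simpa only [map_eq_zero_iff _ (finSuccEquiv k 0).injective] using
    Polynomial.eq_zero_of_sq_eq_X_mul_sq h'

theorem normFormAnisotropic_X_zero_X_one :
    NormFormAnisotropic (X 0 : MvPolynomial (Fin 2) k) (X 1) := by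
  refine NormFormAnisotropic.of_injective (finSuccEquiv k 1).injective ?_
  have hX1 : finSuccEquiv k 1 (X 1) = Polynomial.C (X 0) := finSuccEquiv_X_succ (j := 0)
  rw [finSuccEquiv_X_zero, hX1]
  exact Polynomial.normFormAnisotropic_X_C fun p q => eq_zero_of_sq_eq_X_zero_mul_sq

end MvPolynomial

/-- In the rational function field `F = ℂ(x,y)` (the fraction field of the
polynomial ring `ℂ[x,y]`), the quaternion algebra `ℍ[F, x, y]` is a division ring: every
nonzero element is invertible.  In particular its Brauer class is nonzero. -/
theorem quaternionAlgebra_x_y_isDivisionRing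
    (x y : FractionRing (MvPolynomial (Fin 2) ℂ))
    (hx : x = algebraMap (MvPolynomial (Fin 2) ℂ) _ (MvPolynomial.X 0))
    (hy : y = algebraMap (MvPolynomial (Fin 2) ℂ) _ (MvPolynomial.X 1)) :
    ∀ q : ℍ[FractionRing (MvPolynomial (Fin 2) ℂ), x, y], q ≠ 0 → IsUnit q := by
  subst hx hy
  exact fun q => (MvPolynomial.normFormAnisotropic_X_zero_X_one.algebraMap_of_isFractionRing
    (FractionRing (MvPolynomial (Fin 2) ℂ))).isUnit
end

section
/- Let K be a field containing ℂ which is finitely generated as a field extension of ℂ and has transcendence degree at most 1 over ℂ. Then for all nonzero a, b ∈ K, the quadratic form x² − a·y² − b·z² has a nontrivial zero over K; equivalently, the quaternion algebra ℍ[K,a,b] is not a division ring. (Tsen's theorem: the Brauer group of the function field of a curve over an algebraically closed field vanishes on quaternion classes.) -/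
/-!
If `K` is algebraic over `ℂ` it is `ℂ`, and `a` is a square. Otherwise pick `t ∈ K` transcendental;
the hypotheses make `K` a finite extension of `ℂ(t)`, with a basis `b₁, …, b_m` say. The `ℂ`-space
`L_N` of the elements `∑ pₗ(t) bₗ` with `deg pₗ ≤ N` has dimension `(N + 1) m`. Some
`Δ ∈ ℂ[t] \ {0}` puts every `Δ c bₗ bₗ'` with `c ∈ {1, a, b}` into some `L_D`, so that
`Δ (x² - a y² - b z²)` is a quadratic map from `L_D³`, of dimension `3 (D + 1) m`, to `L_{3D}`,
of dimension `(3 D + 1) m`. Such a map has a nontrivial zero: in coordinates it is given by fewer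
quadrics than variables, all vanishing at the origin, and by Krull's height theorem the origin is
not their only common zero. A nontrivial zero `(x, y, z)` makes `x + y i + z j` a zero divisor of
`ℍ[K,a,b]`, its norm being `x² - a y² - b z²`.
-/

open Quaternion Module Polynomial IntermediateField

namespace MvPolynomial

variable {k σ : Type*} [Field k]

noncomputable def translate (c : σ → k) : MvPolynomial σ k ≃ₐ[k] MvPolynomial σ k :=
  AlgEquiv.ofAlgHom (aeval fun i => X i + C (c i)) (aeval fun i => X i - C (c i))
    (by ext i; simp) (by ext i; simp)

@[simp]
lemma eval_translate (c x : σ → k) (p : MvPolynomial σ k) :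
    eval x (translate c p) = eval (x + c) p := by
  have : (aeval x).comp (translate c).toAlgHom = aeval (x + c) :=
    algHom_ext fun i => by simp [translate]
  simpa using congrArg (· p) this

variable [IsAlgClosed k] [Finite σ]

/-- Translations act transitively on the maximal ideals, so they all have the height
`dim k[X_σ] = |σ|`. -/
lemma height_vanishingIdeal_singleton (x : σ → k) :
    (vanishingIdeal k {x} : Ideal (MvPolynomial σ k)).height = Nat.card σ := by
  have hdim : ringKrullDim (MvPolynomial σ k) = Nat.card σ := by
    simp [ringKrullDim_eq_zero_of_field]
  have : FiniteRingKrullDim (MvPolynomial σ k) := finiteRingKrullDim_iff_ne_bot_and_top.mpr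
    (by rw [hdim]; exact ⟨WithBot.natCast_ne_bot _, WithBot.coe_injective.ne (ENat.natCast_ne_top _)⟩)
  obtain ⟨M, hM, hMh⟩ := Ideal.exists_isMaximal_height (R := MvPolynomial σ k)
  obtain ⟨y, rfl⟩ := eq_vanishingIdeal_singleton_of_isMaximal k hM
  have : vanishingIdeal k {x} = (vanishingIdeal k {y}).comap (translate (x - y)).toRingEquiv := by
    ext p; simp
  rw [this, RingEquiv.height_comap]
  rw [hdim] at hMh
  exact_mod_cast hMh

theorem exists_ne_forall_eval_eq_zero {ι : Type*} [Finite ι] (f : ι → MvPolynomial σ k)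
    (x₀ : σ → k) (hx₀ : ∀ i, eval x₀ (f i) = 0) (hcard : Nat.card ι < Nat.card σ) :
    ∃ x ≠ x₀, ∀ i, eval x (f i) = 0 := by
  by_contra! h
  set I := Ideal.span (Set.range f)
  have hI : I ≤ vanishingIdeal k {x₀} :=
    Ideal.span_le.mpr (by rintro _ ⟨i, rfl⟩ _ rfl; simpa using hx₀ i)
  have hzero : zeroLocus k I = {x₀} := by
    refine Set.Subset.antisymm (fun x hx => ?_) ?_
    · by_contra hne
      obtain ⟨i, hi⟩ := h x hne
      exact hi (hx _ (Ideal.subset_span ⟨i, rfl⟩))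
    · exact Set.singleton_subset_iff.mpr fun p hp => hI hp x₀ rfl
  have hmin : vanishingIdeal k {x₀} ∈ I.minimalPrimes := by
    rw [← Ideal.radical_minimalPrimes, ← vanishingIdeal_zeroLocus_eq_radical (K := k), hzero,
      Ideal.minimalPrimes_eq_subsingleton_self]
    rfl
  have hheight := Ideal.height_le_card_of_mem_minimalPrimes_span (Set.finite_range f) hmin
  rw [height_vanishingIdeal_singleton, Nat.cast_le] at hheight
  have hrange : (Set.range f).ncard ≤ Nat.card ι := by
    rw [← Set.image_univ, ← Set.ncard_univ]
    exact Set.ncard_image_le Set.finite_univ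
  omega

end MvPolynomial

theorem LinearMap.exists_ne_zero_apply_self_eq_zero {k V W : Type*} [Field k] [IsAlgClosed k]
    [AddCommGroup V] [Module k V] [AddCommGroup W] [Module k W]
    [FiniteDimensional k V] [FiniteDimensional k W]
    (B : V →ₗ[k] V →ₗ[k] W) (h : finrank k W < finrank k V) : ∃ v ≠ 0, B v v = 0 := by
  set e := finBasis k V
  set f := finBasis k W
  let P : Fin (finrank k W) → MvPolynomial (Fin (finrank k V)) k := fun l =>
    ∑ p, ∑ q, MvPolynomial.C (f.repr (B (e p) (e q)) l) * MvPolynomial.X p * MvPolynomial.X q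
  have hP (x : Fin (finrank k V) → k) (l) :
      MvPolynomial.eval x (P l) = f.repr (B (e.equivFun.symm x) (e.equivFun.symm x)) l := by
    simp only [P, Basis.equivFun_symm_apply, map_sum, map_smul, LinearMap.sum_apply,
      LinearMap.smul_apply, MvPolynomial.eval_C, MvPolynomial.eval_X, MvPolynomial.eval_mul,
      Finsupp.coe_finsetSum, Finset.sum_apply, Finsupp.smul_apply, smul_eq_mul, Finset.mul_sum]
    rw [Finset.sum_comm]
    exact Finset.sum_congr rfl fun _ _ => Finset.sum_congr rfl fun _ _ => by ring
  obtain ⟨x, hx, hPx⟩ :=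
    MvPolynomial.exists_ne_forall_eval_eq_zero P 0 (fun l => by simp [P]) (by simpa using h)
  refine ⟨e.equivFun.symm x, e.equivFun.symm.map_ne_zero_iff.mpr hx,
    f.forall_coord_eq_zero_iff.mp fun l => ?_⟩
  rw [Basis.coord_apply, ← hP, hPx]

lemma Transcendental.linearIndependent_pow {k K : Type*} [Field k] [Field K] [Algebra k K] {t : K}
    (ht : Transcendental k t) : LinearIndependent k fun i : ℕ => t ^ i := by
  have := (basisMonomials k).linearIndependent.map' (Polynomial.aeval t).toLinearMap
    (LinearMap.ker_eq_bot.mpr (transcendental_iff_injective.mp ht))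
  simpa [Function.comp_def] using this

section DegreeLattice

variable {k K : Type*} [Field k] [Field K] [Algebra k K] {t : K} {ι : Type*} {b : ι → K}

variable (k t b) in
def degreeLattice (N : ℕ) : Submodule k K :=
  Submodule.span k (Set.range fun p : Fin (N + 1) × ι => t ^ (p.1 : ℕ) * b p.2)

instance [Finite ι] (N : ℕ) : FiniteDimensional k (degreeLattice k t b N) :=
  FiniteDimensional.span_of_finite k (Set.finite_range _)

lemma finrank_degreeLattice [Fintype ι] (ht : Transcendental k t) (hb : LinearIndependent k⟮t⟯ b)
    (N : ℕ) : finrank k (degreeLattice k t b N) = (N + 1) * Fintype.card ι := by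
  have hpow : LinearIndependent k fun i : Fin (N + 1) => AdjoinSimple.gen k t ^ (i : ℕ) :=
    .of_comp k⟮t⟯.val.toLinearMap (ht.linearIndependent_pow.comp _ Fin.val_injective)
  have hli : LinearIndependent k fun p : Fin (N + 1) × ι => t ^ (p.1 : ℕ) * b p.2 :=
    linearIndependent_smul hpow hb
  rw [degreeLattice, finrank_span_eq_card hli]
  simp

lemma pow_mul_mem_degreeLattice {N M j : ℕ} (hj : N + j ≤ M) {x : K}
    (hx : x ∈ degreeLattice k t b N) : t ^ j * x ∈ degreeLattice k t b M := by
  induction hx using Submodule.span_induction with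
  | mem _ hy =>
    obtain ⟨⟨i, l⟩, rfl⟩ := hy
    rw [← mul_assoc, ← pow_add]
    exact Submodule.subset_span ⟨(⟨j + i, by omega⟩, l), rfl⟩
  | zero => simp
  | add y z _ _ hy hz => rw [mul_add]; exact add_mem hy hz
  | smul c y _ hy => rw [mul_smul_comm]; exact Submodule.smul_mem _ c hy

lemma aeval_mul_mem_degreeLattice {D : ℕ} {P : k[X]} (hP : P.natDegree ≤ D) (l : ι) :
    aeval t P * b l ∈ degreeLattice k t b D := by
  rw [aeval_eq_sum_range, Finset.sum_mul]
  refine Submodule.sum_mem _ fun i hi => ?_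
  rw [smul_mul_assoc]
  exact Submodule.smul_mem _ _
    (Submodule.subset_span ⟨(⟨i, by simp at hi; omega⟩, l), rfl⟩)

lemma mul_mul_mem_degreeLattice {D N N' : ℕ} {x : K}
    (hx : ∀ l l', x * b l * b l' ∈ degreeLattice k t b D) {u v : K}
    (hu : u ∈ degreeLattice k t b N) (hv : v ∈ degreeLattice k t b N') :
    x * u * v ∈ degreeLattice k t b (D + N + N') := by
  have : degreeLattice k t b N * degreeLattice k t b N' ≤
      (degreeLattice k t b (D + N + N')).comap (LinearMap.mulLeft k x) := by
    rw [degreeLattice, degreeLattice, Submodule.span_mul_span, Submodule.span_le]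
    rintro _ ⟨_, ⟨⟨i, l⟩, rfl⟩, _, ⟨⟨j, l'⟩, rfl⟩, rfl⟩
    have := pow_mul_mem_degreeLattice (M := D + N + N') (j := i + j)
      (by have := i.is_lt; have := j.is_lt; omega) (hx l l')
    simp only [SetLike.mem_coe, Submodule.mem_comap, LinearMap.mulLeft_apply]
    convert this using 1
    ring
  simpa [mul_assoc] using this (Submodule.mul_mem_mul hu hv)

open scoped IntermediateField.algebraAdjoinAdjoin in
lemma exists_mul_mem_degreeLattice [Fintype ι] (b : Basis ι k⟮t⟯ K) {κ : Type*} [Fintype κ]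
    (e : κ → K) : ∃ Δ : K, Δ ≠ 0 ∧ ∃ D, ∀ i, Δ * e i ∈ degreeLattice k t b D := by
  obtain ⟨δ, hδ⟩ := IsLocalization.exist_integer_multiples
    (nonZeroDivisors (Algebra.adjoin k {t})) Finset.univ fun p : κ × ι => b.repr (e p.1) p.2
  choose r hr using fun p => hδ p (Finset.mem_univ p)
  have hpoly (p) : ∃ P : k[X], aeval t P = (r p : K) := by
    simpa [Algebra.adjoin_singleton_eq_range_aeval] using (r p).2
  choose P hP using hpoly
  refine ⟨(δ : Algebra.adjoin k {t}), ?_, Finset.univ.sup fun p => (P p).natDegree, fun i => ?_⟩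
  · exact_mod_cast nonZeroDivisors.coe_ne_zero δ
  rw [← b.sum_repr (e i), Finset.mul_sum]
  refine Submodule.sum_mem _ fun l _ => ?_
  have hcoord : (δ : Algebra.adjoin k {t}) * (b.repr (e i) l : K) = aeval t (P (i, l)) := by
    rw [hP]
    simpa [Algebra.smul_def] using (congrArg (fun x : k⟮t⟯ => (x : K)) (hr (i, l))).symm
  rw [Algebra.smul_def, ← mul_assoc, IntermediateField.algebraMap_apply, hcoord]
  exact aeval_mul_mem_degreeLattice
    (Finset.le_sup (f := fun p => (P p).natDegree) (Finset.mem_univ (i, l))) l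

end DegreeLattice

section Tsen

variable {k K : Type*} [Field k] [Field K] [Algebra k K] {t : K}

theorem exists_ne_zero_sum_mul_sq_eq_zero [IsAlgClosed k] (ht : Transcendental k t)
    [FiniteDimensional k⟮t⟯ K] {n : ℕ} (hn : 3 ≤ n) (c : Fin n → K) :
    ∃ x : Fin n → K, x ≠ 0 ∧ ∑ i, c i * x i ^ 2 = 0 := by
  set b := finBasis k⟮t⟯ K
  set m := finrank k⟮t⟯ K
  obtain ⟨Δ, hΔ, D, hD⟩ :=
    exists_mul_mem_degreeLattice b fun p : Fin n × Fin m × Fin m => c p.1 * b p.2.1 * b p.2.2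
  set L := degreeLattice k t b D
  set W := degreeLattice k t b (D + D + D)
  let B : (Fin n → L) →ₗ[k] (Fin n → L) →ₗ[k] K := ∑ i, (Δ * c i) •
    (LinearMap.mul k K).compl₁₂ (L.subtype ∘ₗ LinearMap.proj i) (L.subtype ∘ₗ LinearMap.proj i)
  have hB (u v : Fin n → L) : B u v = Δ * ∑ i, c i * u i * v i := by
    simp [B, Finset.mul_sum, mul_assoc]
  have hBW (u v : Fin n → L) : B u v ∈ W := by
    rw [hB, Finset.mul_sum]
    refine sum_mem fun i _ => ?_
    rw [← mul_assoc, ← mul_assoc]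
    exact mul_mul_mem_degreeLattice (fun l l' => by simpa [mul_assoc] using hD (i, l, l'))
      (u i).2 (v i).2
  have hdim : finrank k W < finrank k (Fin n → L) := by
    have hm : 0 < m := finrank_pos
    simp only [L, W, Module.finrank_pi_fintype, finrank_degreeLattice ht b.linearIndependent,
      Finset.sum_const, Finset.card_univ, Fintype.card_fin, smul_eq_mul]
    calc (D + D + D + 1) * m < 3 * ((D + 1) * m) := by linarith
      _ ≤ n * ((D + 1) * m) := Nat.mul_le_mul_right _ hn
  obtain ⟨u, hu, hBu⟩ := (B.codRestrict₂ W.subtype W.injective_subtype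
    (by simpa using hBW)).exists_ne_zero_apply_self_eq_zero hdim
  refine ⟨fun i => u i, fun h => hu (funext fun i => Subtype.ext (congrFun h i)), ?_⟩
  have : B u u = 0 := by simpa using congrArg W.subtype hBu
  rw [hB] at this
  simpa [hΔ, sq, mul_assoc] using this

lemma isAlgebraic_adjoin_simple_of_transcendental
    (htr : ∀ f : Fin 2 → K, ¬ AlgebraicIndependent k f) (ht : Transcendental k t) :
    Algebra.IsAlgebraic k⟮t⟯ K := by
  have hbasis : IsTranscendenceBasis k ![t] := by
    refine (algebraicIndependent_iff_transcendental.mpr ht).isTranscendenceBasis_iff.mpr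
      fun κ w hw j _ i => ?_
    by_contra! hne
    refine htr _ (hw.comp ![j 0, i] fun x y hxy => ?_)
    fin_cases x <;> fin_cases y <;> simp_all [eq_comm]
  have := hbasis.isAlgebraic_field
  rwa [Set.range_unique, Matrix.cons_val_fin_one] at this

lemma finiteDimensional_adjoin_simple (hfg : (⊤ : IntermediateField k K).FG)
    [Algebra.IsAlgebraic k⟮t⟯ K] : FiniteDimensional k⟮t⟯ K :=
  have := IntermediateField.fg_top_iff.mp hfg
  have := Algebra.EssFiniteType.of_comp k k⟮t⟯ K
  Algebra.finite_of_essFiniteType_of_isAlgebraic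

end Tsen

lemma QuaternionAlgebra.mk_mul_star_mk {R : Type*} [CommRing R] (a b x y z : R) :
    (⟨x, y, z, 0⟩ : ℍ[R, a, b]) * star ⟨x, y, z, 0⟩ = ↑(x ^ 2 - a * y ^ 2 - b * z ^ 2) := by
  ext <;> simp only [re_mul, imI_mul, imJ_mul, imK_mul, re_star, imI_star, imJ_star, imK_star,
    re_coe, imI_coe, imJ_coe, imK_coe] <;> ring

lemma QuaternionAlgebra.not_forall_isUnit_of_sq_sub_eq_zero {R : Type*} [CommRing R]
    {a b x y z : R} (hne : ¬ (x = 0 ∧ y = 0 ∧ z = 0)) (h : x ^ 2 - a * y ^ 2 - b * z ^ 2 = 0) :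
    ¬ ∀ q : ℍ[R, a, b], q ≠ 0 → IsUnit q := by
  intro hunit
  have hq : (⟨x, y, z, 0⟩ : ℍ[R, a, b]) ≠ 0 := fun h0 =>
    hne ⟨congrArg re h0, congrArg imI h0, congrArg imJ h0⟩
  have := (hunit _ hq).mul_right_eq_zero.mp (by rw [mk_mul_star_mk, h, coe_zero])
  exact hq (star_eq_zero.mp this)

theorem tsen_quaternion_splits_general
    (K : Type*) [Field K] [Algebra ℂ K]
    (hfg : (⊤ : IntermediateField ℂ K).FG)
    (htr : ∀ f : Fin 2 → K, ¬ AlgebraicIndependent ℂ f)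
    (a b : K) :
    (∃ x y z : K, ¬ (x = 0 ∧ y = 0 ∧ z = 0) ∧ x ^ 2 - a * y ^ 2 - b * z ^ 2 = 0) ∧
      ¬ (∀ q : ℍ[K, a, b], q ≠ 0 → IsUnit q) := by
  suffices ∃ x y z : K, ¬ (x = 0 ∧ y = 0 ∧ z = 0) ∧ x ^ 2 - a * y ^ 2 - b * z ^ 2 = 0 by
    obtain ⟨x, y, z, hne, h⟩ := this
    exact ⟨⟨x, y, z, hne, h⟩, QuaternionAlgebra.not_forall_isUnit_of_sq_sub_eq_zero hne h⟩
  by_cases halg : Algebra.IsAlgebraic ℂ K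
  · obtain ⟨c, rfl⟩ := IsAlgClosed.algebraMap_bijective_of_isIntegral (k := ℂ) (K := K) |>.2 a
    obtain ⟨s, rfl⟩ := IsAlgClosed.exists_pow_nat_eq c two_pos
    exact ⟨algebraMap ℂ K s, 1, 0, by simp, by simp⟩
  obtain ⟨t, ht⟩ := (Algebra.transcendental_iff_not_isAlgebraic.mpr halg).transcendental
  have := isAlgebraic_adjoin_simple_of_transcendental htr ht
  have := finiteDimensional_adjoin_simple (t := t) hfg
  obtain ⟨v, hv, hsum⟩ := exists_ne_zero_sum_mul_sq_eq_zero ht le_rfl ![1, -a, -b]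
  refine ⟨v 0, v 1, v 2, fun h => hv (funext fun i => ?_), ?_⟩
  · fin_cases i <;> simp [h.1, h.2.1, h.2.2]
  · simp [Fin.sum_univ_three] at hsum
    linear_combination hsum

/-- Tsen's theorem for quaternion classes: Let `K` be a field extension of `ℂ`
that is finitely generated as a field extension and of transcendence degree at most `1`
(no two elements of `K` are algebraically independent over `ℂ`).  Then for all nonzero
`a, b ∈ K` the form `x² − a y² − b z²` has a nontrivial zero and the quaternion algebra
`ℍ[K,a,b]` is not a division ring. -/
theorem tsen_quaternion_splits
    (K : Type*) [Field K] [Algebra ℂ K]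
    (hfg : (⊤ : IntermediateField ℂ K).FG)
    (htr : ∀ f : Fin 2 → K, ¬ AlgebraicIndependent ℂ f)
    (a b : K) (ha : a ≠ 0) (hb : b ≠ 0) :
    (∃ x y z : K, ¬ (x = 0 ∧ y = 0 ∧ z = 0) ∧ x ^ 2 - a * y ^ 2 - b * z ^ 2 = 0) ∧
      ¬ (∀ q : ℍ[K, a, b], q ≠ 0 → IsUnit q) :=
  tsen_quaternion_splits_general K hfg htr a b
end

section
/- Let R be a discrete valuation ring in which 2 is a unit, with fraction field K, and let q be a nondegenerate quadratic form of rank 4 over K. Then there exists a nonzero scalar c ∈ K such that q is equivalent to c·q′, where q′ is one of the following diagonal forms: (I) ⟨1, −a, −b, a·b·d⟩ with a, b, d units of R; (II) ⟨1, −a, −b, π⟩ with a, b units of R and π a uniformizer of R; (III) ⟨1, −a, π, −π·b⟩ with a, b units of R and π a uniformizer of R. -/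
/-!
Since `2` is invertible, `q` diagonalises. Fix a uniformizer `ϖ`; up to squares every
diagonal entry is `u` or `u ϖ` with `u` a unit of `R`. Rescaling by `ϖ⁻¹` swaps these two kinds
of entries, so we may assume that at most two entries are divisible by `ϖ`, and put them last.
Dividing by the first entry then gives form (I), (II) or (III) according as zero, one or two
entries are divisible by `ϖ`.
-/

open QuadraticMap QuadraticForm

namespace QuadraticForm

variable {ι R : Type*} [Fintype ι] [CommSemiring R]

theorem smul_weightedSumSquares (c : R) (w : ι → R) :
    c • weightedSumSquares R w = weightedSumSquares R (c • w) := by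
  ext x
  simp [weightedSumSquares_apply, Finset.mul_sum, mul_assoc]

theorem equivalent_weightedSumSquares_comp_perm (w : ι → R) (σ : Equiv.Perm ι) :
    (weightedSumSquares R w).Equivalent (weightedSumSquares R (w ∘ σ)) :=
  ⟨{ LinearEquiv.funCongrLeft R R σ with
    map_app' := fun x => by
      simpa [weightedSumSquares_apply] using Equiv.sum_comp σ fun i => w i * (x i * x i) }⟩

theorem equivalent_smul_weightedSumSquares_of_mul_sq (v T : ι → R) (c : R) (σ : Equiv.Perm ι)
    (s : ι → Rˣ) (h : ∀ i, c * T i * s i ^ 2 = v (σ i)) :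
    (weightedSumSquares R v).Equivalent (c • weightedSumSquares R T) := by
  rw [smul_weightedSumSquares]
  exact (equivalent_weightedSumSquares_comp_perm v σ).trans
    ⟨isometryEquivWeightedSumSquaresWeightedSumSquares s h⟩

end QuadraticForm

def IsQuadricNormalForm (R : Type*) [CommRing R] [IsLocalRing R] {K : Type*} [Field K]
    [Algebra R K] (T : Fin 4 → K) : Prop :=
  (∃ a b d : R, IsUnit a ∧ IsUnit b ∧ IsUnit d ∧
      T = ![1, -(algebraMap R K a), -(algebraMap R K b),
        algebraMap R K a * algebraMap R K b * algebraMap R K d]) ∨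
  (∃ a b π : R, IsUnit a ∧ IsUnit b ∧ Ideal.span {π} = IsLocalRing.maximalIdeal R ∧
      T = ![1, -(algebraMap R K a), -(algebraMap R K b), algebraMap R K π]) ∨
  (∃ a b π : R, IsUnit a ∧ IsUnit b ∧ Ideal.span {π} = IsLocalRing.maximalIdeal R ∧
      T = ![1, -(algebraMap R K a), algebraMap R K π, -(algebraMap R K π * algebraMap R K b)])

namespace IsDiscreteValuationRing

variable {R K : Type*} [CommRing R] [IsDomain R] [IsDiscreteValuationRing R]
  [Field K] [Algebra R K]

theorem exists_isQuadricNormalForm_of_monotone {ϖ : R} (hϖ : Irreducible ϖ) (u : Fin 4 → Rˣ)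
    {e : Fin 4 → ℕ} (he : Monotone e) (he1 : e 1 = 0) (he3 : e 3 < 2) :
    ∃ T, IsQuadricNormalForm R T ∧
      ∀ i, algebraMap R K (u 0) * T i = algebraMap R K (u i) * algebraMap R K ϖ ^ e i := by
  have he0 : e 0 = 0 := Nat.eq_zero_of_le_zero (he1 ▸ he (by decide))
  have he23 : e 2 ≤ e 3 := he (by decide)
  have hunif (g : Rˣ) : Ideal.span {(g : R) * ϖ} = IsLocalRing.maximalIdeal R :=
    ((irreducible_iff_uniformizer _).mp ((irreducible_units_mul g).mpr hϖ)).symm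
  have hu (i : Fin 4) : algebraMap R K (u i) ≠ 0 := ((u i).isUnit.map _).ne_zero
  rcases (by omega : e 2 = 0 ∧ e 3 = 0 ∨ e 2 = 0 ∧ e 3 = 1 ∨ e 2 = 1 ∧ e 3 = 1)
    with ⟨h2, h3⟩ | ⟨h2, h3⟩ | ⟨h2, h3⟩
  · refine ⟨_, Or.inl ⟨-↑(u 1 / u 0), -↑(u 2 / u 0), ↑(u 3 * u 0 / (u 1 * u 2)),
      by simp, by simp, by simp, rfl⟩, fun i => ?_⟩
    fin_cases i <;> simp [he0, he1, h2, h3, div_eq_mul_inv, map_units_inv] <;> field_simp [hu]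
  · refine ⟨_, Or.inr <| Or.inl ⟨-↑(u 1 / u 0), -↑(u 2 / u 0), ↑(u 3 / u 0) * ϖ,
      by simp, by simp, hunif (u 3 / u 0), rfl⟩, fun i => ?_⟩
    fin_cases i <;> simp [he0, he1, h2, h3, div_eq_mul_inv, map_units_inv] <;> field_simp [hu]
  · refine ⟨_, Or.inr <| Or.inr ⟨-↑(u 1 / u 0), -↑(u 3 / u 2), ↑(u 2 / u 0) * ϖ,
      by simp, by simp, hunif (u 2 / u 0), rfl⟩, fun i => ?_⟩
    fin_cases i <;> simp [he0, he1, h2, h3, div_eq_mul_inv, map_units_inv] <;> field_simp [hu]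

variable [IsFractionRing R K]

theorem exists_eq_unit_mul_pow_mul_sq {ϖ : R} (hϖ : Irreducible ϖ) {x : K} (hx : x ≠ 0) :
    ∃ (u : Rˣ) (e : ℕ) (s : Kˣ), e < 2 ∧
      x = algebraMap R K u * algebraMap R K ϖ ^ e * s ^ 2 := by
  obtain ⟨n, u, rfl⟩ := exists_units_eq_smul_zpow_of_irreducible hϖ hx
  have hϖK : algebraMap R K ϖ ≠ 0 := by simpa using hϖ.ne_zero
  refine ⟨u, (n % 2).toNat, Units.mk0 _ hϖK ^ (n / 2), by omega, ?_⟩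
  rw [Units.smul_def, Algebra.smul_def, mul_assoc, Units.val_zpow_eq_zpow_val, Units.val_mk0,
    ← zpow_natCast, ← zpow_natCast, ← zpow_mul, ← zpow_add₀ hϖK]
  congr 2
  omega

theorem exists_isQuadricNormalForm_equivalent_of_monotone {ϖ : R} (hϖ : Irreducible ϖ)
    (u : Fin 4 → Rˣ) {e : Fin 4 → ℕ} (he : Monotone e) (he3 : e 3 < 2) :
    ∃ c : K, c ≠ 0 ∧ ∃ T : Fin 4 → K, IsQuadricNormalForm R T ∧
      (weightedSumSquares K fun i => algebraMap R K (u i) * algebraMap R K ϖ ^ e i).Equivalent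
        (c • weightedSumSquares K T) := by
  have hu (i : Fin 4) : algebraMap R K (u i) ≠ 0 := ((u i).isUnit.map _).ne_zero
  by_cases he1 : e 1 = 0
  · obtain ⟨T, hT, hTu⟩ := exists_isQuadricNormalForm_of_monotone (K := K) hϖ u he he1 he3
    exact ⟨_, hu 0, T, hT,
      equivalent_smul_weightedSumSquares_of_mul_sq _ _ _ 1 1 fun i => by simpa using hTu i⟩
  -- at least three entries are divisible by `ϖ`: rescale by `ϖ⁻¹` and reverse the order
  have hϖK : algebraMap R K ϖ ≠ 0 := by simpa using hϖ.ne_zero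
  have he' : Monotone fun i => 1 - e (Fin.rev i) := fun i j hij => by
    have := he (Fin.rev_le_rev.mpr hij)
    dsimp only
    omega
  have he12 : e 1 ≤ e 2 := he (by decide)
  obtain ⟨T, hT, hTu⟩ := exists_isQuadricNormalForm_of_monotone (K := K) hϖ (u ∘ Fin.rev) he'
    (show 1 - e 2 = 0 by omega) (by omega)
  refine ⟨algebraMap R K ((u ∘ Fin.rev) 0) / algebraMap R K ϖ, div_ne_zero (hu _) hϖK, T, hT,
    equivalent_smul_weightedSumSquares_of_mul_sq _ _ _ Fin.revPerm
      (fun i => Units.mk0 _ hϖK ^ e (Fin.rev i)) fun i => ?_⟩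
  rw [div_mul_eq_mul_div, hTu i]
  obtain h | h : e (Fin.rev i) = 0 ∨ e (Fin.rev i) = 1 := by
    have := he (show Fin.rev i ≤ 3 from Fin.le_last _)
    omega
  all_goals
    simp only [Function.comp_apply, Fin.revPerm_apply, h, tsub_zero, tsub_self, pow_zero, pow_one,
      Units.val_one, Units.val_mk0, one_pow, mul_one]
    field_simp

theorem exists_isQuadricNormalForm_equivalent {ϖ : R} (hϖ : Irreducible ϖ)
    (u : Fin 4 → Rˣ) {e : Fin 4 → ℕ} (he : ∀ i, e i < 2) :
    ∃ c : K, c ≠ 0 ∧ ∃ T : Fin 4 → K, IsQuadricNormalForm R T ∧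
      (weightedSumSquares K fun i => algebraMap R K (u i) * algebraMap R K ϖ ^ e i).Equivalent
        (c • weightedSumSquares K T) := by
  obtain ⟨c, hc, T, hT, hcT⟩ := exists_isQuadricNormalForm_equivalent_of_monotone (K := K) hϖ
    (u ∘ Tuple.sort e) (Tuple.monotone_sort e) (he _)
  exact ⟨c, hc, T, hT, (equivalent_weightedSumSquares_comp_perm _ (Tuple.sort e)).trans hcT⟩

end IsDiscreteValuationRing

open IsDiscreteValuationRing in
/-- Let `R` be a discrete valuation ring in which `2` is a unit, with fraction
field `K`, and let `q` be a nondegenerate quadratic form of rank 4 over `K`.  Then, up to a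
nonzero scaling `c`, `q` is equivalent to one of the diagonal forms
(I) `⟨1, −a, −b, a·b·d⟩` with `a, b, d` units of `R`;
(II) `⟨1, −a, −b, π⟩` with `a, b` units of `R` and `π` a uniformizer;
(III) `⟨1, −a, π, −π·b⟩` with `a, b` units of `R` and `π` a uniformizer. -/
theorem quaternary_form_over_dvr_normal_form
    (R : Type*) [CommRing R] [IsDomain R] [IsDiscreteValuationRing R] (h2 : IsUnit (2 : R))
    (K : Type*) [Field K] [Algebra R K] [IsFractionRing R K]
    (q : QuadraticForm K (Fin 4 → K)) (hq : q.polarBilin.Nondegenerate) :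
    ∃ c : K, c ≠ 0 ∧
      ((∃ a b d : R, IsUnit a ∧ IsUnit b ∧ IsUnit d ∧
          q.Equivalent (c • weightedSumSquares K
            ![1, -(algebraMap R K a), -(algebraMap R K b),
              algebraMap R K a * algebraMap R K b * algebraMap R K d])) ∨
       (∃ a b π : R, IsUnit a ∧ IsUnit b ∧ Ideal.span {π} = IsLocalRing.maximalIdeal R ∧
          q.Equivalent (c • weightedSumSquares K
            ![1, -(algebraMap R K a), -(algebraMap R K b), algebraMap R K π])) ∨
       (∃ a b π : R, IsUnit a ∧ IsUnit b ∧ Ideal.span {π} = IsLocalRing.maximalIdeal R ∧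
          q.Equivalent (c • weightedSumSquares K
            ![1, -(algebraMap R K a), algebraMap R K π,
              -(algebraMap R K π * algebraMap R K b)]))) := by
  have h2K : IsUnit (2 : K) := by
    rw [← map_ofNat (algebraMap R K) 2]
    exact h2.map _
  have : Invertible (2 : K) := h2K.invertible
  have hsep : (associated (R := K) q).SeparatingLeft :=
    (nondegenerate_associated_iff.mpr (nondegenerate_polar_iff.mp hq)).1
  have hdiag := q.equivalent_weightedSumSquares_units_of_nondegenerate' hsep
  rw [Module.finrank_fin_fun] at hdiag
  obtain ⟨w, hw : q.Equivalent (weightedSumSquares K fun i => (w i : K))⟩ := hdiag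
  obtain ⟨ϖ, hϖ⟩ := exists_irreducible R
  choose u e s he hw_eq using fun i => exists_eq_unit_mul_pow_mul_sq (K := K) hϖ (w i).ne_zero
  obtain ⟨c, hc, T, hT, hcT⟩ := exists_isQuadricNormalForm_equivalent (K := K) hϖ u he
  have hqT : q.Equivalent (c • weightedSumSquares K T) :=
    hw.trans <| .trans
      ⟨isometryEquivWeightedSumSquaresWeightedSumSquares s fun i => (hw_eq i).symm⟩ hcT
  refine ⟨c, hc, ?_⟩
  rcases hT with ⟨a, b, d, ha, hb, hd, rfl⟩ | ⟨a, b, π, ha, hb, hπ, rfl⟩ |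
    ⟨a, b, π, ha, hb, hπ, rfl⟩
  exacts [.inl ⟨a, b, d, ha, hb, hd, hqT⟩, .inr (.inl ⟨a, b, π, ha, hb, hπ, hqT⟩),
    .inr (.inr ⟨a, b, π, ha, hb, hπ, hqT⟩)]
end
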